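/- Let α > 0 and suppose the vectors x*, y*, ν_x, ν_y ∈ ℝⁿ, λ ∈ ℝᵐ, μ ∈ ℝ^q satisfy: x* ≥ 0, y* ≥ 0, λ ≥ 0, ν_x ≥ 0, ν_y ≥ 0; ∇f(x*) + Σ_i λ_i ∇g_i(x*) + Σ_j μ_j ∇h_j(x*) + α·y* − ν_x = 0; p_i′(y*_i) + α·x*_i − (ν_y)_i = 0 for all i; min{−g_i(x*), λ_i} = 0 for all i = 1, …, m; h(x*) = 0; min{x*_i, (ν_x)_i} = 0 and min{y*_i, (ν_y)_i} = 0 for all i = 1, …, n; and Σ_{i=1}^n x*_i·y*_i = 0. Then x* is S-stationary for (SPO), y*_i = s_i for every i with x*_i = 0 and y*_i = 0 for every i with x*_i ≠ 0, and (x*, y*) is a KKT point of (SPOref). -/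

import Mathlib

open Filter Topology

noncomputable section

/-- Euclidean n-space. -/
abbrev E (n : ℕ) : Type := EuclideanSpace ℝ (Fin n)

/-- The SP-Lagrangian L(x, λ, μ) = f(x) + λᵀg(x) + μᵀh(x). -/
def LSP {n m q : ℕ} (f : E n → ℝ) (g : Fin m → E n → ℝ) (h : Fin q → E n → ℝ)
    (lam : Fin m → ℝ) (mu : Fin q → ℝ) (x : E n) : ℝ :=
  f x + (∑ i, lam i * g i x) + (∑ j, mu j * h j x)

/-- S-stationarity of x* for (SPO). -/
def SStat {n m q : ℕ} (f : E n → ℝ) (g : Fin m → E n → ℝ) (h : Fin q → E n → ℝ)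
    (xstar : E n) : Prop :=
  ∃ (lam : Fin m → ℝ) (mu : Fin q → ℝ),
    (∀ i, 0 ≤ lam i) ∧ (∀ i, lam i * g i xstar = 0) ∧
    ∀ i, xstar i ≠ 0 → gradient (LSP f g h lam mu) xstar i = 0

/-- KKT point of the reformulation (SPOref). -/
def KKTref {n m q : ℕ} (f : E n → ℝ) (g : Fin m → E n → ℝ) (h : Fin q → E n → ℝ)
    (p : Fin n → ℝ → ℝ) (x y : E n) : Prop :=
  (∀ i, g i x ≤ 0) ∧ (∀ j, h j x = 0) ∧ (∀ i, 0 ≤ x i) ∧ (∀ i, x i * y i = 0) ∧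
  ∃ (lam : Fin m → ℝ) (mu : Fin q → ℝ) (ν γ : Fin n → ℝ),
    (∀ i, 0 ≤ lam i) ∧ (∀ i, lam i * g i x = 0) ∧
    (∀ i, 0 ≤ ν i) ∧ (∀ i, ν i * x i = 0) ∧
    (∀ k, gradient f x k + (∑ i, lam i * gradient (g i) x k) +
        (∑ j, mu j * gradient (h j) x k) - ν k + γ k * y k = 0) ∧
    (∀ i, deriv (p i) (y i) + γ i * x i = 0)

open Set

/-!
The hypotheses are the exact KKT conditions of the penalised problem
`min f(x) + α xᵀy + p(y)` over `x, y ≥ 0`, each complementarity pair written as `min a b = 0`.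
Where `x*ᵢ > 0` complementarity forces `y*ᵢ = 0` and `(ν_x)ᵢ = 0`, so the `x`-equation is
`∂ᵢL = 0`. Where `x*ᵢ = 0` the `y`-equation reads `pᵢ'(y*ᵢ) = (ν_y)ᵢ`; a convex `pᵢ` with unique
minimiser `sᵢ > 0` has `pᵢ'(0) < 0`, so `y*ᵢ > 0`, hence `pᵢ'(y*ᵢ) = 0` and `y*ᵢ = sᵢ`.
The multiplier `γ = α - ν_y / x*` then turns the penalised KKT system into that of (SPOref).
-/

lemma min_eq_zero_iff_nonneg_and_mul_eq_zero {R : Type*} [Ring R] [LinearOrder R]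
    [IsStrictOrderedRing R] {a b : R} : min a b = 0 ↔ 0 ≤ a ∧ 0 ≤ b ∧ a * b = 0 := by
  constructor
  · intro h
    refine ⟨h ▸ min_le_left a b, h ▸ min_le_right a b, ?_⟩
    rcases min_choice a b with hab | hab <;> rw [hab] at h <;> simp [h]
  · rintro ⟨ha, hb, hab⟩
    rcases mul_eq_zero.1 hab with rfl | rfl
    exacts [min_eq_left hb, min_eq_right ha]

namespace ConvexOn

variable {φ : ℝ → ℝ}

lemma deriv_neg_of_lt_of_apply_lt (hφ : ConvexOn ℝ univ φ) {a b : ℝ}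
    (hd : DifferentiableAt ℝ φ a) (hab : a < b) (hφab : φ b < φ a) : deriv φ a < 0 :=
  calc deriv φ a ≤ slope φ a b := hφ.deriv_le_slope (mem_univ a) (mem_univ b) hab hd
    _ < 0 := by
      rw [slope_def_field]
      exact div_neg_of_neg_of_pos (by linarith) (by linarith)

lemma eq_of_deriv_eq_zero (hφ : ConvexOn ℝ univ φ) {s y : ℝ}
    (hs : ∀ t, t ≠ s → φ s < φ t) (hd : DifferentiableAt ℝ φ y) (hy : deriv φ y = 0) :
    y = s := by
  have hright : derivWithin φ (Ioi y) y = 0 := by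
    rw [hd.hasDerivAt.hasDerivWithinAt.derivWithin (uniqueDiffWithinAt_Ioi y), hy]
  have hmin : IsMinOn φ univ y :=
    hφ.isMinOn_of_rightDeriv_eq_zero (by simp) hright
  by_contra hne
  exact (hs y hne).not_ge (hmin (mem_univ s))

lemma eq_of_min_deriv_eq_zero (hφ : ConvexOn ℝ univ φ) {s y : ℝ} (hs_pos : 0 < s)
    (hs : ∀ t, t ≠ s → φ s < φ t) (hd : DifferentiableAt ℝ φ y) (hy : min y (deriv φ y) = 0) :
    y = s := by
  obtain ⟨-, hderiv_nonneg, hmul⟩ := min_eq_zero_iff_nonneg_and_mul_eq_zero.1 hy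
  rcases mul_eq_zero.1 hmul with rfl | hderiv
  · exact absurd hderiv_nonneg
      (hφ.deriv_neg_of_lt_of_apply_lt hd hs_pos (hs 0 hs_pos.ne)).not_ge
  · exact hφ.eq_of_deriv_eq_zero hs hd hderiv

end ConvexOn

lemma gradient_apply_eq_fderiv {n : ℕ} {u : E n → ℝ} {x : E n} (hu : DifferentiableAt ℝ u x)
    (k : Fin n) : gradient u x k = fderiv ℝ u x (EuclideanSpace.single k 1) := by
  rw [hu.hasGradientAt.fderiv_apply, EuclideanSpace.inner_single_right]
  simp

lemma gradient_LSP_apply {n m q : ℕ} {f : E n → ℝ} {g : Fin m → E n → ℝ}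
    {h : Fin q → E n → ℝ} {x : E n} (hf : DifferentiableAt ℝ f x)
    (hg : ∀ i, DifferentiableAt ℝ (g i) x) (hh : ∀ j, DifferentiableAt ℝ (h j) x)
    (lam : Fin m → ℝ) (mu : Fin q → ℝ) (k : Fin n) :
    gradient (LSP f g h lam mu) x k = gradient f x k + (∑ i, lam i * gradient (g i) x k) +
      (∑ j, mu j * gradient (h j) x k) := by
  have hL : HasFDerivAt (LSP f g h lam mu) (fderiv ℝ f x + (∑ i, lam i • fderiv ℝ (g i) x)
      + (∑ j, mu j • fderiv ℝ (h j) x)) x :=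
    (hf.hasFDerivAt.fun_add (.fun_sum fun i _ => (hg i).hasFDerivAt.const_mul (lam i))).fun_add
      (.fun_sum fun j _ => (hh j).hasFDerivAt.const_mul (mu j))
  simp only [gradient_apply_eq_fderiv hL.differentiableAt, hL.fderiv, gradient_apply_eq_fderiv hf,
    gradient_apply_eq_fderiv (hg _), gradient_apply_eq_fderiv (hh _), add_apply, sum_apply,
    smul_apply, smul_eq_mul]

theorem stmt_13_general {n m q : ℕ}
    (f : E n → ℝ) (g : Fin m → E n → ℝ) (h : Fin q → E n → ℝ)
    (hf : ContDiff ℝ 1 f) (hg : ∀ i, ContDiff ℝ 1 (g i)) (hh : ∀ j, ContDiff ℝ 1 (h j))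
    (p : Fin n → ℝ → ℝ) (s : Fin n → ℝ)
    (hp : ∀ i, ContDiff ℝ 1 (p i))
    (hconv : ∀ i, ConvexOn ℝ Set.univ (p i))
    (hspos : ∀ i, 0 < s i)
    (hstrict : ∀ i t, t ≠ s i → p i (s i) < p i t)
    {α : ℝ}
    (xstar ystar : E n) (νx νy : Fin n → ℝ) (lam : Fin m → ℝ) (mu : Fin q → ℝ)
    -- exact stationarity of the penalized problem:
    (hstat1 : ∀ k, gradient f xstar k + (∑ i, lam i * gradient (g i) xstar k) +
        (∑ j, mu j * gradient (h j) xstar k) + α * ystar k - νx k = 0)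
    (hstat2 : ∀ i, deriv (p i) (ystar i) + α * xstar i - νy i = 0)
    -- exact complementarity / feasibility conditions:
    (hming : ∀ i, min (-(g i xstar)) (lam i) = 0)
    (hhx : ∀ j, h j xstar = 0)
    (hminx : ∀ i, min (xstar i) (νx i) = 0)
    (hminy : ∀ i, min (ystar i) (νy i) = 0)
    (hcompl : ∑ i, xstar i * ystar i = 0) :
    SStat f g h xstar ∧
    (∀ i, (xstar i = 0 → ystar i = s i) ∧ (xstar i ≠ 0 → ystar i = 0)) ∧
    KKTref f g h p xstar ystar := by
  have hg_lam := fun i => min_eq_zero_iff_nonneg_and_mul_eq_zero.1 (hming i)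
  have hxν := fun i => min_eq_zero_iff_nonneg_and_mul_eq_zero.1 (hminx i)
  have hyν := fun i => min_eq_zero_iff_nonneg_and_mul_eq_zero.1 (hminy i)
  have hxy : ∀ i, xstar i * ystar i = 0 := fun i =>
    (Finset.sum_eq_zero_iff_of_nonneg fun i _ => mul_nonneg (hxν i).1 (hyν i).1).1 hcompl i
      (Finset.mem_univ i)
  have hy_of_ne : ∀ i, xstar i ≠ 0 → ystar i = 0 := fun i hi =>
    (mul_eq_zero.1 (hxy i)).resolve_left hi
  have hνx_of_ne : ∀ i, xstar i ≠ 0 → νx i = 0 := fun i hi =>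
    (mul_eq_zero.1 (hxν i).2.2).resolve_left hi
  have hy_of_eq : ∀ i, xstar i = 0 → ystar i = s i := by
    intro i hi
    have hderiv : deriv (p i) (ystar i) = νy i := by linear_combination hstat2 i - α * hi
    exact (hconv i).eq_of_min_deriv_eq_zero (hspos i) (hstrict i)
      ((hp i).differentiable one_ne_zero _) (hderiv ▸ hminy i)
  have hνy_of_eq : ∀ i, xstar i = 0 → νy i = 0 := fun i hi =>
    (mul_eq_zero.1 (hyν i).2.2).resolve_left (hy_of_eq i hi ▸ (hspos i).ne')
  have hlam_g : ∀ i, lam i * g i xstar = 0 := fun i => by linear_combination -(hg_lam i).2.2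
  have hgradL := gradient_LSP_apply (hf.differentiable one_ne_zero xstar)
    (fun i => (hg i).differentiable one_ne_zero xstar)
    (fun j => (hh j).differentiable one_ne_zero xstar) lam mu
  refine ⟨⟨lam, mu, fun i => (hg_lam i).2.1, hlam_g, fun k hk => ?_⟩,
    fun i => ⟨hy_of_eq i, hy_of_ne i⟩, ?_⟩
  · rw [hgradL, ← hstat1 k, hy_of_ne k hk, hνx_of_ne k hk]
    ring
  -- `γ = α - ν_y / x*`; where `x*ᵢ = 0` the division is `0`, harmless since `(ν_y)ᵢ = 0` there.
  refine ⟨fun i => by linarith [(hg_lam i).1], hhx, fun i => (hxν i).1, hxy,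
    lam, mu, νx, fun i => α - νy i / xstar i, fun i => (hg_lam i).2.1, hlam_g,
    fun i => (hxν i).2.1, fun i => by rw [mul_comm]; exact (hxν i).2.2, fun k => ?_, fun i => ?_⟩
  · have hγy : νy k / xstar k * ystar k = 0 := by
      by_cases hk : xstar k = 0
      · simp [hk]
      · simp [hy_of_ne k hk]
    linear_combination hstat1 k - hγy
  · linear_combination hstat2 i - div_mul_cancel_of_imp (hνy_of_eq i)

/-- if the penalty method terminates with exact tolerances
(δ = 0), then the final point is S-stationary and is a KKT point of
(SPOref). -/
theorem stmt_13 {n m q : ℕ} (hn : 1 ≤ n) {ρ : ℝ} (hρ : 0 < ρ)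
    (f : E n → ℝ) (g : Fin m → E n → ℝ) (h : Fin q → E n → ℝ)
    (hf : ContDiff ℝ 1 f) (hg : ∀ i, ContDiff ℝ 1 (g i)) (hh : ∀ j, ContDiff ℝ 1 (h j))
    (p : Fin n → ℝ → ℝ) (s : Fin n → ℝ)
    (hp : ∀ i, ContDiff ℝ 1 (p i))
    (hconv : ∀ i, ConvexOn ℝ Set.univ (p i))
    (hspos : ∀ i, 0 < s i)
    (hmin : ∀ i t, p i (s i) ≤ p i t)
    (hstrict : ∀ i t, t ≠ s i → p i (s i) < p i t)
    (hscale : ∀ i, p i 0 - p i (s i) = ρ)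
    {α : ℝ} (hα : 0 < α)
    (xstar ystar : E n) (νx νy : Fin n → ℝ) (lam : Fin m → ℝ) (mu : Fin q → ℝ)
    -- sign conditions:
    (hxnn : ∀ i, 0 ≤ xstar i) (hynn : ∀ i, 0 ≤ ystar i)
    (hlamnn : ∀ i, 0 ≤ lam i) (hνxnn : ∀ i, 0 ≤ νx i) (hνynn : ∀ i, 0 ≤ νy i)
    -- exact stationarity of the penalized problem:
    (hstat1 : ∀ k, gradient f xstar k + (∑ i, lam i * gradient (g i) xstar k) +
        (∑ j, mu j * gradient (h j) xstar k) + α * ystar k - νx k = 0)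
    (hstat2 : ∀ i, deriv (p i) (ystar i) + α * xstar i - νy i = 0)
    -- exact complementarity / feasibility conditions:
    (hming : ∀ i, min (-(g i xstar)) (lam i) = 0)
    (hhx : ∀ j, h j xstar = 0)
    (hminx : ∀ i, min (xstar i) (νx i) = 0)
    (hminy : ∀ i, min (ystar i) (νy i) = 0)
    (hcompl : ∑ i, xstar i * ystar i = 0) :
    SStat f g h xstar ∧
    (∀ i, (xstar i = 0 → ystar i = s i) ∧ (xstar i ≠ 0 → ystar i = 0)) ∧
    KKTref f g h p xstar ystar :=
  stmt_13_general f g h hf hg hh p s hp hconv hspos hstrict xstar ystar νx νy lam mu hstat1 hstat2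
    hming hhx hminx hminy hcompl
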